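/- For every n ∈ ℕ₊ one has 2·|t_2(n)| ≥ |t_2(n-1) + t_2(n+1)|, and equality holds whenever n is even. -/

import Mathlib

/-!
Since `T(x) = (1 - x) T(x²)`, squaring gives `T(x)² = (1 - x)² T(x²)²`, which yields the
recurrences `t₂(2k+1) = -2 t₂(k)` and `t₂(2k+2) = t₂(k+1) + t₂(k)`. At even `n = 2k+2` these turn
`t₂(n-1) + t₂(n+1)` into `-2 t₂(n)` on the nose. At odd `n = 2k+1 ≥ 3` they turn
`t₂(n-1) + t₂(n+1)` into `(t₂(k-1) + t₂(k+1)) + 2 t₂(k)`, and the triangle inequality with the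
inequality at `k` bounds this by `4 |t₂(k)| = 2 |t₂(n)|`.
-/

/-- The generating function `T(x) = ∑ (-1)^{s₂(n)} xⁿ = ∏ (1 - x^{2^j})`
of the Prouhet–Thue–Morse sequence. -/
noncomputable def T : PowerSeries ℤ :=
  PowerSeries.mk fun n => (-1) ^ (Nat.digits 2 n).sum

open PowerSeries

section Recurrence

variable {R : Type*} [CommRing R] [LinearOrder R] [IsStrictOrderedRing R] {u : ℕ → R}

theorem two_mul_abs_eq_abs_add_of_odd (hodd : ∀ k, u (2 * k + 1) = -2 * u k)
    (heven : ∀ k, u (2 * k + 2) = u (k + 1) + u k) {m : ℕ} (hm : Odd m) :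
    2 * |u (m + 1)| = |u m + u (m + 2)| := by
  obtain ⟨k, rfl⟩ := hm
  rw [add_assoc, one_add_one_eq_two, heven, show 2 * k + 1 + 2 = 2 * (k + 1) + 1 by ring, hodd,
    hodd, ← mul_add, abs_mul, abs_neg, abs_two, add_comm (u k)]

theorem abs_add_le_two_mul_abs (hodd : ∀ k, u (2 * k + 1) = -2 * u k)
    (heven : ∀ k, u (2 * k + 2) = u (k + 1) + u k) (m : ℕ) :
    |u m + u (m + 2)| ≤ 2 * |u (m + 1)| := by
  induction m using Nat.strong_induction_on with
  | _ m ih =>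
  obtain ⟨k, rfl | rfl⟩ := m.even_or_odd'
  · rw [hodd, abs_mul, abs_neg, abs_two]
    rcases k with _ | k
    · have h : u 0 + u 2 = 0 := by
        have h1 := hodd 0
        have h2 := heven 0
        simp only [mul_zero, zero_add] at h1 h2
        rw [h2, h1]
        ring
      simp [h]
    · have hk := ih k (by omega)
      have hsum : u (2 * (k + 1)) + u (2 * (k + 1) + 2) = (u k + u (k + 2)) + 2 * u (k + 1) := by
        rw [heven (k + 1), mul_add_one, heven k]
        ring
      calc |u (2 * (k + 1)) + u (2 * (k + 1) + 2)|
          ≤ |u k + u (k + 2)| + |2 * u (k + 1)| := hsum ▸ abs_add_le _ _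
        _ ≤ 2 * (2 * |u (k + 1)|) := by rw [abs_mul, abs_two]; linarith
  · exact (two_mul_abs_eq_abs_add_of_odd hodd heven (odd_two_mul_add_one k)).ge

end Recurrence

section Expand

variable {R : Type*} [CommRing R] (φ : R⟦X⟧)

theorem one_sub_X_sq_mul (f : R⟦X⟧) : (1 - X) ^ 2 * f = f - X * f - X * f + X * (X * f) := by
  ring

theorem coeff_two_mul_add_one_one_sub_X_sq_mul_expand (k : ℕ) :
    coeff (2 * k + 1) ((1 - X) ^ 2 * expand 2 two_ne_zero φ) = -2 * coeff k φ := by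
  rw [one_sub_X_sq_mul, map_add, map_sub, map_sub, coeff_succ_X_mul, coeff_succ_X_mul,
    coeff_expand_mul, coeff_expand_of_not_dvd _ _ _ (by omega)]
  rcases k with _ | k
  · rw [coeff_zero_X_mul]
    ring
  · rw [mul_add_one, coeff_succ_X_mul, coeff_expand_of_not_dvd _ _ _ (by omega)]
    ring

theorem coeff_two_mul_add_two_one_sub_X_sq_mul_expand (k : ℕ) :
    coeff (2 * k + 2) ((1 - X) ^ 2 * expand 2 two_ne_zero φ) = coeff (k + 1) φ + coeff k φ := by
  rw [one_sub_X_sq_mul, map_add, map_sub, map_sub, coeff_succ_X_mul, coeff_succ_X_mul,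
    coeff_succ_X_mul, coeff_expand_of_not_dvd (m := 2 * k + 1) _ _ _ (by omega), ← mul_add_one,
    coeff_expand_mul, coeff_expand_mul]
  ring

end Expand

section ThueMorse

theorem coeff_T (n : ℕ) : coeff n T = (-1) ^ (Nat.digits 2 n).sum :=
  coeff_mk _ _

theorem coeff_T_two_mul (n : ℕ) : coeff (2 * n) T = coeff n T := by
  rcases n.eq_zero_or_pos with rfl | hn
  · rfl
  rw [coeff_T, coeff_T, ← zero_add (2 * n),
    Nat.digits_add 2 one_lt_two 0 n two_pos (.inr hn.ne'), List.sum_cons, zero_add]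

theorem coeff_T_two_mul_add_one (n : ℕ) : coeff (2 * n + 1) T = -coeff n T := by
  rw [coeff_T, coeff_T, add_comm, Nat.digits_add 2 one_lt_two 1 n one_lt_two (.inl one_ne_zero),
    List.sum_cons, pow_add, pow_one, neg_one_mul]

theorem T_eq_one_sub_X_mul_expand : T = (1 - X) * expand 2 two_ne_zero T := by
  ext n
  rw [sub_mul, one_mul, map_sub]
  obtain ⟨k, rfl | rfl⟩ := n.even_or_odd'
  · rcases k with _ | k
    · rw [mul_zero, coeff_zero_X_mul, sub_zero, ← mul_zero 2, coeff_expand_mul, coeff_T_two_mul]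
    · rw [mul_add_one, coeff_succ_X_mul, coeff_expand_of_not_dvd (m := 2 * k + 1) _ _ _ (by omega),
        ← mul_add_one, coeff_expand_mul, coeff_T_two_mul, sub_zero]
  · rw [coeff_succ_X_mul, coeff_expand_mul, coeff_expand_of_not_dvd _ _ _ (by omega), zero_sub,
      coeff_T_two_mul_add_one]

theorem T_sq_eq_one_sub_X_sq_mul_expand :
    T ^ 2 = (1 - X) ^ 2 * expand 2 two_ne_zero (T ^ 2) := by
  conv_lhs => rw [T_eq_one_sub_X_mul_expand]
  rw [map_pow, mul_pow]

theorem coeff_T_sq_two_mul_add_one (k : ℕ) :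
    coeff (2 * k + 1) (T ^ 2) = -2 * coeff k (T ^ 2) := by
  conv_lhs => rw [T_sq_eq_one_sub_X_sq_mul_expand]
  exact coeff_two_mul_add_one_one_sub_X_sq_mul_expand _ k

theorem coeff_T_sq_two_mul_add_two (k : ℕ) :
    coeff (2 * k + 2) (T ^ 2) = coeff (k + 1) (T ^ 2) + coeff k (T ^ 2) := by
  conv_lhs => rw [T_sq_eq_one_sub_X_sq_mul_expand]
  exact coeff_two_mul_add_two_one_sub_X_sq_mul_expand _ k

end ThueMorse

theorem stmt13 (n : ℕ) (hn : 1 ≤ n) :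
    |PowerSeries.coeff (R := ℤ) (n - 1) (T ^ 2) + PowerSeries.coeff (R := ℤ) (n + 1) (T ^ 2)| ≤
      2 * |PowerSeries.coeff (R := ℤ) n (T ^ 2)| ∧
    (Even n →
      2 * |PowerSeries.coeff (R := ℤ) n (T ^ 2)| =
        |PowerSeries.coeff (R := ℤ) (n - 1) (T ^ 2) + PowerSeries.coeff (R := ℤ) (n + 1) (T ^ 2)|) := by
  obtain ⟨m, rfl⟩ := Nat.exists_eq_add_of_le' hn
  rw [Nat.add_sub_cancel, add_assoc, one_add_one_eq_two]
  exact ⟨abs_add_le_two_mul_abs (u := (coeff · (T ^ 2))) coeff_T_sq_two_mul_add_one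
    coeff_T_sq_two_mul_add_two m, fun he =>
    two_mul_abs_eq_abs_add_of_odd (u := (coeff · (T ^ 2))) coeff_T_sq_two_mul_add_one
      coeff_T_sq_two_mul_add_two (Nat.not_even_iff_odd.mp (Nat.even_add_one.mp he))⟩
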